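/- Let D⊆F₄⁺ be a non-singular rook placement, let β₀∈D, and let ξ₁, ξ₂ : D→ℂ∖{0} be maps with ξ₁(β₀)≠ξ₂(β₀). Assume there exists a simple root α₀∈{α₁,α₂,α₃,α₄} such that (α₀,β₀)≠0 and (α₀,β)=0 for every β∈D∖{β₀} with β≮β₀. Then Ω_{D,ξ₁} ≠ Ω_{D,ξ₂}. -/

import Mathlib

/-!
Let `φ` be the diagonal derivation `e_γ ↦ (α₀, γ) e_γ` of `𝔫`. If `f₂ = f₁ ∘ exp(-ad x)`, then
conjugating `φ` by `exp(-ad x)` changes it only by an inner derivation `ad u`, so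
`f₁ (φ (exp(-ad x) e_{β₀})) = f₂ ((φ + ad u) e_{β₀})`. The left side is `(α₀, β₀) ξ₁(β₀)`, since
`exp(-ad x) e_{β₀} - e_{β₀}` lies in the span of the `e_μ` with `μ > β₀`, where `f₁ ∘ φ` vanishes
by the choice of `α₀`. The right side is `(α₀, β₀) ξ₂(β₀)`, since `[u, e_{β₀}]` lies in the span
of the `e_{γ + β₀}`, none of which is in `D` because `D` is non-singular.
-/

open scoped RealInnerProductSpace

/-- The standard basis vectors `ε₁, ε₂, ε₃, ε₄` of `ℝ⁴` (indexed by `Fin 4`). -/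
noncomputable def eps (i : Fin 4) : EuclideanSpace ℝ (Fin 4) := EuclideanSpace.single i 1

/-- The set of positive roots of the root system `F₄`:
`{εᵢ} ∪ {εᵢ−εⱼ, εᵢ+εⱼ : i<j} ∪ {(ε₁±ε₂±ε₃±ε₄)/2}`. -/
noncomputable def F4pos : Set (EuclideanSpace ℝ (Fin 4)) :=
  {v | (∃ i, v = eps i) ∨
       (∃ i j : Fin 4, i < j ∧ (v = eps i - eps j ∨ v = eps i + eps j)) ∨
       (∃ s : Fin 4 → ℝ, s 0 = 1 ∧ (∀ k, s k = 1 ∨ s k = -1) ∧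
          v = (1/2 : ℝ) • ∑ k, s k • eps k)}

/-- The simple roots `α₁ = ε₂−ε₃`, `α₂ = ε₃−ε₄`, `α₃ = ε₄`, `α₄ = (ε₁−ε₂−ε₃−ε₄)/2` of `F₄`. -/
noncomputable def sroot : Fin 4 → EuclideanSpace ℝ (Fin 4) :=
  ![eps 1 - eps 2, eps 2 - eps 3, eps 3, (1/2 : ℝ) • (eps 0 - eps 1 - eps 2 - eps 3)]

/-- The full root system `F₄ = F₄⁺ ∪ (−F₄⁺)`. -/
def F4all : Set (EuclideanSpace ℝ (Fin 4)) := {v | v ∈ F4pos ∨ -v ∈ F4pos}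

/-- The exponential of a (nilpotent) endomorphism, as a finite sum. -/
noncomputable def expNil {M : Type*} [AddCommGroup M] [Module ℂ M] (A : Module.End ℂ M) :
    Module.End ℂ M :=
  ∑ k ∈ Finset.range (nilpotencyClass A), (k.factorial : ℂ)⁻¹ • A ^ k

/-- The coadjoint orbit of a linear form `f ∈ 𝔫*`: all `f ∘ exp(−ad x)`, `x ∈ 𝔫`. -/
noncomputable def orbitOf {n : Type*} [LieRing n] [LieAlgebra ℂ n] (f : Module.Dual ℂ n) :
    Set (Module.Dual ℂ n) :=
  {lam | ∃ x : n, lam = f.comp (expNil (-(LieAlgebra.ad ℂ n x)))}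

/-- `x ≤ y` iff `y − x` is a (possibly empty) sum of positive roots of `F₄`. -/
def rootLE (x y : EuclideanSpace ℝ (Fin 4)) : Prop :=
  ∃ M : Multiset (EuclideanSpace ℝ (Fin 4)), (∀ g ∈ M, g ∈ F4pos) ∧ y - x = M.sum

/-- `x < y` iff `x ≤ y` and `x ≠ y`. -/
def rootLT (x y : EuclideanSpace ℝ (Fin 4)) : Prop := rootLE x y ∧ x ≠ y

local notation "ℝ⁴" => EuclideanSpace ℝ (Fin 4)

section NilpotentExp

open Finset

variable {M : Type*} [AddCommGroup M] [Module ℂ M]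

lemma expNil_eq_sum {A : Module.End ℂ M} {k : ℕ} (hA : A ^ k = 0) :
    expNil A = ∑ i ∈ range k, (i.factorial : ℂ)⁻¹ • A ^ i := by
  refine sum_subset (range_subset_range.mpr (csInf_le' hA)) fun i _ hi ↦ ?_
  rw [pow_eq_zero_of_le (not_lt.mp (mem_range.not.mp hi)) (pow_nilpotencyClass ⟨k, hA⟩),
    smul_zero]

lemma expNil_zero : expNil (0 : Module.End ℂ M) = 1 := by
  simp [expNil_eq_sum (pow_one (0 : Module.End ℂ M))]

lemma expNil_eq_exp [Module ℚ (Module.End ℂ M)] (A : Module.End ℂ M) :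
    expNil A = IsNilpotent.exp A := by
  refine sum_congr rfl fun i _ ↦ ?_
  simpa using (ratCast_smul_eq ℚ ℂ ((i.factorial : ℚ)⁻¹) (A ^ i)).symm

lemma expNil_add_of_commute {A B : Module.End ℂ M} (hAB : Commute A B) (hA : IsNilpotent A)
    (hB : IsNilpotent B) : expNil (A + B) = expNil A * expNil B := by
  -- `IsNilpotent.exp` needs some `ℚ`-module structure; by `expNil_eq_exp` any one will do
  let _ : Module ℚ (Module.End ℂ M) := Module.compHom _ (algebraMap ℚ ℂ)
  simp only [expNil_eq_exp, IsNilpotent.exp_add_of_commute hAB hA hB]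

lemma expNil_mulLeft {A B : Module.End ℂ M} (hB : IsNilpotent B) :
    expNil (LinearMap.mulLeft ℂ B) A = expNil B * A := by
  obtain ⟨k, hk⟩ := hB
  have hk' : LinearMap.mulLeft ℂ B ^ k = 0 := by
    rw [LinearMap.pow_mulLeft, hk, LinearMap.mulLeft_zero_eq_zero]
  simp [expNil_eq_sum hk, expNil_eq_sum hk', LinearMap.pow_mulLeft, sum_mul]

lemma expNil_mulRight {A B : Module.End ℂ M} (hB : IsNilpotent B) :
    expNil (LinearMap.mulRight ℂ B) A = A * expNil B := by
  obtain ⟨k, hk⟩ := hB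
  have hk' : LinearMap.mulRight ℂ B ^ k = 0 := by
    rw [LinearMap.pow_mulRight, hk, LinearMap.mulRight_zero_eq_zero]
  simp [expNil_eq_sum hk, expNil_eq_sum hk', LinearMap.pow_mulRight, mul_sum]

lemma isNilpotent_mulLeft {B : Module.End ℂ M} (hB : IsNilpotent B) :
    IsNilpotent (LinearMap.mulLeft ℂ B) := by
  obtain ⟨k, hk⟩ := hB
  exact ⟨k, by rw [LinearMap.pow_mulLeft, hk, LinearMap.mulLeft_zero_eq_zero]⟩

lemma isNilpotent_mulRight_sub_mulLeft {B : Module.End ℂ M} (hB : IsNilpotent B) :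
    IsNilpotent (LinearMap.mulRight ℂ B - LinearMap.mulLeft ℂ B) := by
  obtain ⟨k, hk⟩ := hB
  have hR : IsNilpotent (LinearMap.mulRight ℂ B) :=
    ⟨k, by rw [LinearMap.pow_mulRight, hk, LinearMap.mulRight_zero_eq_zero]⟩
  exact (LinearMap.commute_mulLeft_right B B).symm.isNilpotent_sub hR (isNilpotent_mulLeft ⟨k, hk⟩)

/-- Since `mulRight B - mulLeft B = -ad B`, this says `exp(-B) A exp B = exp(-ad B) A`. -/
lemma mul_expNil {A B : Module.End ℂ M} (hB : IsNilpotent B) :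
    A * expNil B = expNil B * expNil (LinearMap.mulRight ℂ B - LinearMap.mulLeft ℂ B) A := by
  set K := LinearMap.mulRight ℂ B - LinearMap.mulLeft ℂ B
  have hsplit : LinearMap.mulRight ℂ B = LinearMap.mulLeft ℂ B + K := by simp [K]
  have hcomm : Commute (LinearMap.mulLeft ℂ B) K :=
    (LinearMap.commute_mulLeft_right B B).sub_right (Commute.refl _)
  calc A * expNil B = expNil (LinearMap.mulRight ℂ B) A := (expNil_mulRight hB).symm
    _ = expNil (LinearMap.mulLeft ℂ B) (expNil K A) := by
      rw [hsplit, expNil_add_of_commute hcomm (isNilpotent_mulLeft hB)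
        (isNilpotent_mulRight_sub_mulLeft hB), Module.End.mul_apply]
    _ = expNil B * expNil K A := expNil_mulLeft hB

lemma expNil_apply_sub_mem {P : Module.End ℂ M} (hP : IsNilpotent P) {S : Submodule ℂ M}
    (hS : ∀ s ∈ S, P s ∈ S) {w : M} (hw : P w ∈ S) : expNil P w - w ∈ S := by
  obtain ⟨k, hk⟩ := hP
  have hpow : ∀ i, (P ^ (i + 1)) w ∈ S := by
    intro i
    induction i with
    | zero => simpa using hw
    | succ i ih => rw [pow_succ', Module.End.mul_apply]; exact hS _ ih
  rw [expNil_eq_sum (pow_eq_zero_of_le k.le_succ hk), sum_range_succ', LinearMap.add_apply]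
  simpa using S.sum_mem fun i _ ↦ S.smul_mem _ (hpow i)

end NilpotentExp

section CoadjointOrbit

variable {L : Type*} [LieRing L] [LieAlgebra ℂ L]

lemma self_mem_orbitOf (f : Module.Dual ℂ L) : f ∈ orbitOf f :=
  ⟨0, by rw [map_zero, neg_zero, expNil_zero, Module.End.one_eq_id, LinearMap.comp_id]⟩

lemma LieDerivation.exists_mul_expNil_eq (φ : LieDerivation ℂ L L) {x : L}
    (hx : IsNilpotent (LieAlgebra.ad ℂ L x)) :
    ∃ u : L, (φ : Module.End ℂ L) * expNil (-LieAlgebra.ad ℂ L x) =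
      expNil (-LieAlgebra.ad ℂ L x) * (φ + LieAlgebra.ad ℂ L u) := by
  set B := -LieAlgebra.ad ℂ L x
  set K := LinearMap.mulRight ℂ B - LinearMap.mulLeft ℂ B
  set S := LinearMap.range (LieAlgebra.ad ℂ L : L →ₗ[ℂ] Module.End ℂ L)
  have hK_ad : ∀ z, K (LieAlgebra.ad ℂ L z) = LieAlgebra.ad ℂ L ⁅x, z⁆ := by
    intro z; ext v
    simp only [K, B, LinearMap.sub_apply, LinearMap.mulRight_apply, LinearMap.mulLeft_apply,
      Module.End.mul_apply, LinearMap.neg_apply, LieAlgebra.ad_apply, lie_neg]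
    rw [leibniz_lie x z v]; abel
  have hK_φ : K φ = LieAlgebra.ad ℂ L (-φ x) := by
    ext v
    simp only [K, B, LinearMap.sub_apply, LinearMap.mulRight_apply, LinearMap.mulLeft_apply,
      Module.End.mul_apply, LinearMap.neg_apply, LieAlgebra.ad_apply, map_neg,
      LieDerivation.coeFn_coe, LieDerivation.apply_lie_eq_add]
    abel
  obtain ⟨u, hu⟩ : expNil K φ - φ ∈ S :=
    expNil_apply_sub_mem (isNilpotent_mulRight_sub_mulLeft hx.neg)
      (by rintro _ ⟨z, rfl⟩; exact ⟨⁅x, z⁆, (hK_ad z).symm⟩) ⟨-φ x, hK_φ.symm⟩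
  refine ⟨u, ?_⟩
  rw [mul_expNil hx.neg, show LieAlgebra.ad ℂ L u = expNil K φ - φ from hu, add_sub_cancel]

lemma mul_apply_eq_of_mem_orbitOf (hnil : ∀ x : L, IsNilpotent (LieAlgebra.ad ℂ L x))
    {f₁ f₂ : Module.Dual ℂ L} (hf : f₂ ∈ orbitOf f₁) (φ : LieDerivation ℂ L L) {v : L} {c : ℂ}
    (hv : φ v = c • v) {S : Submodule ℂ L} (hS : ∀ z : L, ∀ s ∈ S, ⁅z, s⁆ ∈ S)
    (hvS : ∀ z : L, ⁅z, v⁆ ∈ S) (hφS : ∀ s ∈ S, f₁ (φ s) = 0) (hf₂ : ∀ z : L, f₂ ⁅z, v⁆ = 0) :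
    c * f₁ v = c * f₂ v := by
  obtain ⟨x, rfl⟩ := hf
  set θ := expNil (-LieAlgebra.ad ℂ L x)
  obtain ⟨u, hu⟩ := φ.exists_mul_expNil_eq (hnil x)
  have hθv : θ v - v ∈ S := expNil_apply_sub_mem (hnil x).neg
    (fun s hs ↦ by simpa using S.neg_mem (hS x s hs)) (by simpa using S.neg_mem (hvS x))
  calc c * f₁ v = f₁ (φ (θ v)) := by
        have := hφS _ hθv
        rw [map_sub, map_sub, hv, map_smul, smul_eq_mul] at this
        exact (sub_eq_zero.mp this).symm
    _ = f₁ (θ (φ v + ⁅u, v⁆)) := congrArg f₁ (LinearMap.congr_fun hu v)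
    _ = c * f₁ (θ v) := by
        rw [hv, map_add, map_add, map_smul, map_smul, smul_eq_mul]
        simpa using hf₂ u

end CoadjointOrbit

section WeightBasis

variable {ι Γ R L : Type*} [AddCommMonoid Γ] [CommRing R] [LieRing L] [LieAlgebra R L]

def IsWeightBasis (e : Module.Basis ι R L) (wt : ι → Γ) : Prop :=
  ∀ i j, ⁅e i, e j⁆ ∈ Submodule.span R (e '' {k | wt k = wt i + wt j})

namespace IsWeightBasis

variable {e : Module.Basis ι R L} {wt : ι → Γ}

lemma lie_mem_span_image (he : IsWeightBasis e wt) {s t : Set ι}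
    (hst : ∀ i, ∀ j ∈ t, ∀ k, wt k = wt i + wt j → k ∈ s) (z : L) {v : L}
    (hv : v ∈ Submodule.span R (e '' t)) : ⁅z, v⁆ ∈ Submodule.span R (e '' s) := by
  set W := Submodule.span R (e '' s)
  have hbasis : ∀ j ∈ t, ∀ y : L, ⁅e j, y⁆ ∈ W := by
    intro j hj y
    have : Submodule.span R (Set.range e) ≤ W.comap (LieAlgebra.ad R L (e j)) := by
      refine Submodule.span_le.mpr ?_
      rintro _ ⟨i, rfl⟩
      refine Submodule.span_mono (Set.image_mono fun k hk ↦ hst i j hj k ?_) (he j i)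
      rw [show wt k = wt j + wt i from hk, add_comm]
    exact this (e.span_eq ▸ Submodule.mem_top)
  have : Submodule.span R (e '' t) ≤ W.comap (LieAlgebra.ad R L z) := by
    refine Submodule.span_le.mpr ?_
    rintro _ ⟨j, hj, rfl⟩
    rw [SetLike.mem_coe, Submodule.mem_comap, LieAlgebra.ad_apply, ← lie_skew]
    exact W.neg_mem (hbasis j hj z)
  exact this hv

noncomputable def derivation (he : IsWeightBasis e wt) (χ : Γ →+ R) : LieDerivation R L L where
  toLinearMap := e.constr R fun i ↦ χ (wt i) • e i
  leibniz' a b := by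
    set D := e.constr R fun i ↦ χ (wt i) • e i
    have hD : ∀ i, D (e i) = χ (wt i) • e i := e.constr_basis R _
    have hbasis : ∀ i j, D ⁅e i, e j⁆ = ⁅e i, D (e j)⁆ - ⁅e j, D (e i)⁆ := by
      intro i j
      have : Submodule.span R (e '' {k | wt k = wt i + wt j}) ≤
          Module.End.eigenspace D (χ (wt i) + χ (wt j)) := by
        refine Submodule.span_le.mpr ?_
        rintro _ ⟨k, hk, rfl⟩
        rw [SetLike.mem_coe, Module.End.mem_eigenspace_iff, hD,
          show wt k = wt i + wt j from hk, map_add]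
      rw [Module.End.mem_eigenspace_iff.mp (this (he i j)), hD, hD, lie_smul, lie_smul,
        ← lie_skew (e i)]
      module
    -- both sides are bilinear in `(a, b)`, so the basis case suffices
    have h := LinearMap.ext_basis e e
      (B := (LieModule.toEnd R L L : L →ₗ[R] L →ₗ[R] L).compr₂ D)
      (B' := (LieModule.toEnd R L L : L →ₗ[R] L →ₗ[R] L).compl₂ D -
        (LieModule.toEnd R L L : L →ₗ[R] L →ₗ[R] L).flip.comp D) (by simpa using hbasis)
    simpa using LinearMap.congr_fun₂ h a b

lemma derivation_apply_basis (he : IsWeightBasis e wt) (χ : Γ →+ R) (i : ι) :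
    he.derivation χ (e i) = χ (wt i) • e i :=
  e.constr_basis R _ i

end IsWeightBasis

end WeightBasis

section RootOrder

/-- It takes the value `1` on each simple root, so on roots it is the usual height. -/
noncomputable def height : ℝ⁴ →ₗ[ℝ] ℝ where
  toFun v := 8 * v 0 + 3 * v 1 + 2 * v 2 + v 3
  map_add' u v := by simp only [PiLp.add_apply]; ring
  map_smul' c v := by simp only [PiLp.smul_apply, smul_eq_mul, RingHom.id_apply]; ring

lemma height_eps (i : Fin 4) : height (eps i) = ![8, 3, 2, 1] i := by
  fin_cases i <;> simp [height, eps]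

lemma height_pos_of_mem_F4pos {v : ℝ⁴} (hv : v ∈ F4pos) : 0 < height v := by
  rcases hv with ⟨i, rfl⟩ | ⟨i, j, hij, rfl | rfl⟩ | ⟨s, hs0, hs, rfl⟩
  · fin_cases i <;> simp [height_eps]
  · fin_cases i <;> fin_cases j <;> simp_all [height_eps] <;> norm_num
  · fin_cases i <;> fin_cases j <;> simp_all [height_eps] <;> norm_num
  · simp only [map_smul, Fin.sum_univ_four, map_add, hs0, smul_eq_mul]
    rcases hs 1 with h1 | h1 <;> rcases hs 2 with h2 | h2 <;> rcases hs 3 with h3 | h3 <;>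
      simp [h1, h2, h3, height_eps] <;> norm_num

lemma height_lt_of_sub_eq_sum {x y : ℝ⁴} {M : Multiset ℝ⁴} (hM : ∀ g ∈ M, g ∈ F4pos)
    (hM0 : M ≠ 0) (hxy : y - x = M.sum) : height x < height y := by
  have : 0 < height (y - x) := by
    rw [hxy, map_multiset_sum]
    simpa using Multiset.sum_lt_sum_of_nonempty hM0 (f := fun _ ↦ (0 : ℝ)) (g := height)
      fun g hg ↦ height_pos_of_mem_F4pos (hM g hg)
  linarith [map_sub height y x]

lemma rootLT.height_lt {x y : ℝ⁴} (h : rootLT x y) : height x < height y := by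
  obtain ⟨⟨M, hM, hxy⟩, hne⟩ := h
  refine height_lt_of_sub_eq_sum hM ?_ hxy
  rintro rfl
  exact hne (sub_eq_zero.mp hxy).symm

lemma rootLT.not_rootLT {x y : ℝ⁴} (h : rootLT x y) : ¬ rootLT y x :=
  fun h' ↦ lt_asymm h.height_lt h'.height_lt

lemma rootLE_refl (x : ℝ⁴) : rootLE x x :=
  ⟨0, by simp, by simp⟩

lemma rootLT_add_of_rootLE {x y γ : ℝ⁴} (hγ : γ ∈ F4pos) (h : rootLE x y) :
    rootLT x (γ + y) := by
  obtain ⟨M, hM, hxy⟩ := h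
  have hM' : ∀ g ∈ γ ::ₘ M, g ∈ F4pos := by
    simpa [Multiset.mem_cons, forall_eq_or_imp] using ⟨hγ, hM⟩
  have hsum : γ + y - x = (γ ::ₘ M).sum := by rw [Multiset.sum_cons, ← hxy]; abel
  exact ⟨⟨γ ::ₘ M, hM', hsum⟩,
    (height_lt_of_sub_eq_sum hM' (Multiset.cons_ne_zero) hsum).ne ∘ congrArg height⟩

lemma add_mem_F4pos_of_mem_F4all {x y : ℝ⁴} (hx : x ∈ F4pos) (hy : y ∈ F4pos)
    (h : x + y ∈ F4all) : x + y ∈ F4pos := by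
  refine h.resolve_right fun hneg ↦ ?_
  have := height_pos_of_mem_F4pos hneg
  rw [map_neg, map_add] at this
  linarith [height_pos_of_mem_F4pos hx, height_pos_of_mem_F4pos hy]

lemma add_ne_zero_of_mem_F4pos {x y : ℝ⁴} (hx : x ∈ F4pos) (hy : y ∈ F4pos) :
    x + y ≠ 0 := by
  intro h
  have := congrArg height h
  rw [map_add, map_zero] at this
  linarith [height_pos_of_mem_F4pos hx, height_pos_of_mem_F4pos hy]

end RootOrder

lemma Module.Basis.sum_smul_coord_apply_self {ι R M : Type*} [CommSemiring R] [AddCommMonoid M]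
    [Module R M] [DecidableEq ι] (e : Module.Basis ι R M) (D : Finset ι) (ξ : ι → R) (i : ι) :
    (∑ j ∈ D, ξ j • e.coord j) (e i) = if i ∈ D then ξ i else 0 := by
  simp [Finsupp.single_apply]

section F4

variable {n : Type*} [LieRing n] [LieAlgebra ℂ n] {e : Module.Basis F4pos ℂ n}

lemma isWeightBasis_of_chevalley {g : Type*} [LieRing g] [LieAlgebra ℂ g]
    (b : Module.Basis (Fin 4 ⊕ F4all) ℂ g) (N : F4all → F4all → ℂ)
    (hNbr : ∀ γ δ : F4all, ∀ h : (γ : ℝ⁴) + δ ∈ F4all,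
      ⁅b (Sum.inr γ), b (Sum.inr δ)⁆ = N γ δ • b (Sum.inr ⟨(γ : ℝ⁴) + δ, h⟩))
    (hzero : ∀ γ δ : F4all, (γ : ℝ⁴) + δ ∉ F4all → (γ : ℝ⁴) + δ ≠ 0 →
      ⁅b (Sum.inr γ), b (Sum.inr δ)⁆ = 0)
    (ι : n →ₗ⁅ℂ⁆ g) (hinj : Function.Injective ι)
    (hιe : ∀ γ : F4pos, ι (e γ) = b (Sum.inr ⟨(γ : ℝ⁴), Or.inl γ.2⟩)) :
    IsWeightBasis e ((↑) : F4pos → ℝ⁴) := by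
  intro γ δ
  by_cases hall : (γ : ℝ⁴) + δ ∈ F4all
  · have hpos := add_mem_F4pos_of_mem_F4all γ.2 δ.2 hall
    have : ⁅e γ, e δ⁆ = N ⟨γ, Or.inl γ.2⟩ ⟨δ, Or.inl δ.2⟩ • e ⟨_, hpos⟩ := by
      apply hinj
      rw [LieHom.map_lie, hιe, hιe, hNbr _ _ hall, map_smul, hιe]
    rw [this]
    exact Submodule.smul_mem _ _ (Submodule.subset_span ⟨⟨_, hpos⟩, rfl, rfl⟩)
  · have : ⁅e γ, e δ⁆ = 0 := by
      apply hinj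
      rw [LieHom.map_lie, hιe, hιe, map_zero]
      exact hzero _ _ hall (add_ne_zero_of_mem_F4pos γ.2 δ.2)
    rw [this]
    exact Submodule.zero_mem _

lemma lie_mem_span_rootLT (he : IsWeightBasis e ((↑) : F4pos → ℝ⁴)) {β₀ : F4pos} (z : n)
    {v : n} (hv : v ∈ Submodule.span ℂ (e '' {μ | rootLE (β₀ : ℝ⁴) μ})) :
    ⁅z, v⁆ ∈ Submodule.span ℂ (e '' {μ | rootLT (β₀ : ℝ⁴) μ}) :=
  he.lie_mem_span_image (fun i _ hj k hk ↦ by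
    rw [Set.mem_ofPred_eq, hk]; exact rootLT_add_of_rootLE i.2 hj) z hv

lemma sum_smul_coord_apply_lie_eq_zero (he : IsWeightBasis e ((↑) : F4pos → ℝ⁴))
    {D : Finset F4pos} (hns : ∀ γ ∈ D, ∀ δ ∈ D, (γ : ℝ⁴) ≠ δ → (γ : ℝ⁴) - δ ∉ F4pos)
    {β₀ : F4pos} (hβ₀D : β₀ ∈ D) (ξ : F4pos → ℂ) (z : n) :
    (∑ γ ∈ D, ξ γ • e.coord γ) ⁅z, e β₀⁆ = 0 := by
  classical
  have hmem := he.lie_mem_span_image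
    (s := {k | ∃ γ : F4pos, (k : ℝ⁴) = γ + β₀}) (t := {β₀})
    (fun i j hj k hk ↦ ⟨i, by rw [hk, Set.mem_singleton_iff.mp hj]⟩) z
    (Submodule.subset_span ⟨β₀, rfl, rfl⟩)
  refine (Submodule.span_le (p := LinearMap.ker _)).mpr ?_ hmem
  rintro _ ⟨k, ⟨γ, hk⟩, rfl⟩
  rw [SetLike.mem_coe, LinearMap.mem_ker, e.sum_smul_coord_apply_self, if_neg]
  intro hkD
  refine hns k hkD β₀ hβ₀D ?_ (by rw [hk, add_sub_cancel_right]; exact γ.2)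
  rw [hk]
  exact (rootLT_add_of_rootLE γ.2 (rootLE_refl _)).2.symm

lemma sum_smul_coord_apply_derivation_eq_zero (he : IsWeightBasis e ((↑) : F4pos → ℝ⁴))
    (χ : ℝ⁴ →+ ℂ) {D : Finset F4pos} {β₀ : F4pos}
    (hχ : ∀ β ∈ D, β ≠ β₀ → ¬ rootLT (β : ℝ⁴) β₀ → χ β = 0) (ξ : F4pos → ℂ) {s : n}
    (hs : s ∈ Submodule.span ℂ (e '' {μ | rootLT (β₀ : ℝ⁴) μ})) :
    (∑ γ ∈ D, ξ γ • e.coord γ) (he.derivation χ s) = 0 := by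
  classical
  refine (Submodule.span_le (p := LinearMap.ker ((∑ γ ∈ D, ξ γ • e.coord γ) ∘ₗ
    (he.derivation χ : Module.End ℂ n)))).mpr ?_ hs
  rintro _ ⟨μ, hμ, rfl⟩
  rw [SetLike.mem_coe, LinearMap.mem_ker, LinearMap.comp_apply, LieDerivation.coeFn_coe,
    he.derivation_apply_basis, map_smul, e.sum_smul_coord_apply_self, smul_eq_mul]
  split_ifs with hμD
  · rw [hχ μ hμD (fun h ↦ hμ.2 (congrArg Subtype.val h).symm) hμ.not_rootLT, zero_mul]
  · rw [mul_zero]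

end F4

theorem stmt16_general
    -- the simple complex Lie algebra `𝔤` of type `F₄`, with a Chevalley-type basis
    -- `{h₁,…,h₄} ∪ {e_γ : γ ∈ F₄}`: here `h i = b (Sum.inl i)` and `e_γ = b (Sum.inr γ)`
    {g : Type*} [LieRing g] [LieAlgebra ℂ g]
    (b : Module.Basis (Fin 4 ⊕ F4all) ℂ g)
    (N : F4all → F4all → ℂ)
    (hNbr : ∀ γ δ : F4all, ∀ h : (γ : EuclideanSpace ℝ (Fin 4)) + δ ∈ F4all,
      ⁅b (Sum.inr γ), b (Sum.inr δ)⁆ =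
        N γ δ • b (Sum.inr ⟨(γ : EuclideanSpace ℝ (Fin 4)) + δ, h⟩))
    (hzero : ∀ γ δ : F4all,
      (γ : EuclideanSpace ℝ (Fin 4)) + (δ : EuclideanSpace ℝ (Fin 4)) ∉ F4all →
      (γ : EuclideanSpace ℝ (Fin 4)) + (δ : EuclideanSpace ℝ (Fin 4)) ≠ 0 →
      ⁅b (Sum.inr γ), b (Sum.inr δ)⁆ = 0)
    -- `𝔫 = span{e_γ : γ ∈ F₄⁺}` is the nilpotent subalgebra of `𝔤` spanned by the
    -- positive root vectors; we realize it as a Lie algebra `n` with basis `(e_γ)_{γ∈F₄⁺}`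
    -- embedded in `𝔤` via `ι`
    {n : Type*} [LieRing n] [LieAlgebra ℂ n]
    (e : Module.Basis F4pos ℂ n)
    (ι : n →ₗ⁅ℂ⁆ g) (hinj : Function.Injective ι)
    (hιe : ∀ γ : F4pos,
      ι (e γ) = b (Sum.inr ⟨(γ : EuclideanSpace ℝ (Fin 4)), Or.inl γ.2⟩))
    (hnil : ∀ x : n, IsNilpotent (LieAlgebra.ad ℂ n x))
    (D : Finset F4pos)
    -- `D` is a non-singular rook placement
    (hns : ∀ γ ∈ D, ∀ δ ∈ D, (γ : EuclideanSpace ℝ (Fin 4)) ≠ δ →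
      (γ : EuclideanSpace ℝ (Fin 4)) - (δ : EuclideanSpace ℝ (Fin 4)) ∉ F4pos)
    (β₀ : F4pos) (hβ₀D : β₀ ∈ D)
    -- a simple root `α₀ = sroot i₀` with `(α₀,β₀) ≠ 0` and `(α₀,β) = 0`
    -- for every `β ∈ D ∖ {β₀}` with `β ≮ β₀`
    (i₀ : Fin 4)
    (hα₀β₀ : ⟪sroot i₀, (β₀ : EuclideanSpace ℝ (Fin 4))⟫ ≠ 0)
    (hα₀ : ∀ β ∈ D, β ≠ β₀ →
      ¬ rootLT (β : EuclideanSpace ℝ (Fin 4)) (β₀ : EuclideanSpace ℝ (Fin 4)) →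
      ⟪sroot i₀, (β : EuclideanSpace ℝ (Fin 4))⟫ = 0)
    (ξ₁ ξ₂ : F4pos → ℂ)
    (hξβ₀ : ξ₁ β₀ ≠ ξ₂ β₀) :
    orbitOf (∑ γ ∈ D, ξ₁ γ • e.coord γ) ≠ orbitOf (∑ γ ∈ D, ξ₂ γ • e.coord γ) := by
  classical
  intro horb
  have hf : ∑ γ ∈ D, ξ₂ γ • e.coord γ ∈ orbitOf (∑ γ ∈ D, ξ₁ γ • e.coord γ) := by
    rw [horb]; exact self_mem_orbitOf _
  have he := isWeightBasis_of_chevalley b N hNbr hzero ι hinj hιe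
  let χ : ℝ⁴ →+ ℂ :=
    AddMonoidHom.mk' (fun v ↦ (⟪sroot i₀, v⟫ : ℂ)) fun u v ↦ by simp [inner_add_right]
  have key := mul_apply_eq_of_mem_orbitOf hnil hf (he.derivation χ)
    (he.derivation_apply_basis χ β₀)
    (fun z s hs ↦ lie_mem_span_rootLT he z (Submodule.span_mono (Set.image_mono fun _ h ↦ h.1) hs))
    (fun z ↦ lie_mem_span_rootLT he z (Submodule.subset_span ⟨β₀, rootLE_refl _, rfl⟩))
    (fun s hs ↦ sum_smul_coord_apply_derivation_eq_zero he χ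
      (fun β hβ hne hlt ↦ by simp [χ, hα₀ β hβ hne hlt]) ξ₁ hs)
    (sum_smul_coord_apply_lie_eq_zero he hns hβ₀D ξ₂)
  simp only [e.sum_smul_coord_apply_self, if_pos hβ₀D] at key
  exact hξβ₀ (mul_left_cancel₀ (by simpa [χ] using hα₀β₀) key)

theorem stmt16
    -- the simple complex Lie algebra `𝔤` of type `F₄`, with a Chevalley-type basis
    -- `{h₁,…,h₄} ∪ {e_γ : γ ∈ F₄}`: here `h i = b (Sum.inl i)` and `e_γ = b (Sum.inr γ)`
    {g : Type*} [LieRing g] [LieAlgebra ℂ g]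
    (b : Module.Basis (Fin 4 ⊕ F4all) ℂ g)
    (hHH : ∀ i j : Fin 4, ⁅b (Sum.inl i), b (Sum.inl j)⁆ = 0)
    (hHE : ∀ (i : Fin 4) (γ : F4all), ⁅b (Sum.inl i), b (Sum.inr γ)⁆ =
      ((2 * ⟪(γ : EuclideanSpace ℝ (Fin 4)), sroot i⟫ / ⟪sroot i, sroot i⟫ : ℝ) : ℂ) •
        b (Sum.inr γ))
    (N : F4all → F4all → ℂ)
    (hNbr : ∀ γ δ : F4all, ∀ h : (γ : EuclideanSpace ℝ (Fin 4)) + δ ∈ F4all,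
      ⁅b (Sum.inr γ), b (Sum.inr δ)⁆ =
        N γ δ • b (Sum.inr ⟨(γ : EuclideanSpace ℝ (Fin 4)) + δ, h⟩))
    (hN0 : ∀ γ δ : F4all,
      (γ : EuclideanSpace ℝ (Fin 4)) + (δ : EuclideanSpace ℝ (Fin 4)) ∈ F4all → N γ δ ≠ 0)
    -- `[e_γ, e_{−γ}]` lies in the span of the `hᵢ` and acts on each `e_δ`
    -- by the scalar `2(δ,γ)/(γ,γ)`
    (hCart : ∀ γ : F4all, ∀ h : -(γ : EuclideanSpace ℝ (Fin 4)) ∈ F4all, ∃ t : Fin 4 → ℂ,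
      ⁅b (Sum.inr γ), b (Sum.inr ⟨-(γ : EuclideanSpace ℝ (Fin 4)), h⟩)⁆ =
        ∑ i, t i • b (Sum.inl i) ∧
      ∀ δ : F4all, ⁅∑ i, t i • b (Sum.inl i), b (Sum.inr δ)⁆ =
        ((2 * ⟪(δ : EuclideanSpace ℝ (Fin 4)), (γ : EuclideanSpace ℝ (Fin 4))⟫ /
            ⟪(γ : EuclideanSpace ℝ (Fin 4)), (γ : EuclideanSpace ℝ (Fin 4))⟫ : ℝ) : ℂ) •
          b (Sum.inr δ))
    (hzero : ∀ γ δ : F4all,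
      (γ : EuclideanSpace ℝ (Fin 4)) + (δ : EuclideanSpace ℝ (Fin 4)) ∉ F4all →
      (γ : EuclideanSpace ℝ (Fin 4)) + (δ : EuclideanSpace ℝ (Fin 4)) ≠ 0 →
      ⁅b (Sum.inr γ), b (Sum.inr δ)⁆ = 0)
    -- `𝔫 = span{e_γ : γ ∈ F₄⁺}` is the nilpotent subalgebra of `𝔤` spanned by the
    -- positive root vectors; we realize it as a Lie algebra `n` with basis `(e_γ)_{γ∈F₄⁺}`
    -- embedded in `𝔤` via `ι`
    {n : Type*} [LieRing n] [LieAlgebra ℂ n]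
    (e : Module.Basis F4pos ℂ n)
    (ι : n →ₗ⁅ℂ⁆ g) (hinj : Function.Injective ι)
    (hιe : ∀ γ : F4pos,
      ι (e γ) = b (Sum.inr ⟨(γ : EuclideanSpace ℝ (Fin 4)), Or.inl γ.2⟩))
    (hnil : ∀ x : n, IsNilpotent (LieAlgebra.ad ℂ n x))
    (D : Finset F4pos)
    -- `D` is a non-singular rook placement
    (hrook : ∀ γ ∈ D, ∀ δ ∈ D, (γ : EuclideanSpace ℝ (Fin 4)) ≠ δ →
      ⟪(γ : EuclideanSpace ℝ (Fin 4)), (δ : EuclideanSpace ℝ (Fin 4))⟫ ≤ 0)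
    (hns : ∀ γ ∈ D, ∀ δ ∈ D, (γ : EuclideanSpace ℝ (Fin 4)) ≠ δ →
      (γ : EuclideanSpace ℝ (Fin 4)) - (δ : EuclideanSpace ℝ (Fin 4)) ∉ F4pos)
    (β₀ : F4pos) (hβ₀D : β₀ ∈ D)
    -- a simple root `α₀ = sroot i₀` with `(α₀,β₀) ≠ 0` and `(α₀,β) = 0`
    -- for every `β ∈ D ∖ {β₀}` with `β ≮ β₀`
    (i₀ : Fin 4)
    (hα₀β₀ : ⟪sroot i₀, (β₀ : EuclideanSpace ℝ (Fin 4))⟫ ≠ 0)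
    (hα₀ : ∀ β ∈ D, β ≠ β₀ →
      ¬ rootLT (β : EuclideanSpace ℝ (Fin 4)) (β₀ : EuclideanSpace ℝ (Fin 4)) →
      ⟪sroot i₀, (β : EuclideanSpace ℝ (Fin 4))⟫ = 0)
    (ξ₁ ξ₂ : F4pos → ℂ)
    (hξ₁ : ∀ γ ∈ D, ξ₁ γ ≠ 0) (hξ₂ : ∀ γ ∈ D, ξ₂ γ ≠ 0)
    (hξβ₀ : ξ₁ β₀ ≠ ξ₂ β₀) :
    orbitOf (∑ γ ∈ D, ξ₁ γ • e.coord γ) ≠ orbitOf (∑ γ ∈ D, ξ₂ γ • e.coord γ) :=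
  stmt16_general b N hNbr hzero e ι hinj hιe hnil D hns β₀ hβ₀D i₀ hα₀β₀ hα₀ ξ₁ ξ₂ hξβ₀
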